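/- arXiv:0911.2951 — 7 statements merged into one kernel-verified Lean document; each statement's English description precedes it below -/
import Mathlib

section
/- Let V be a real vector space with a basis (e_λ)_{λ∈Λ} and a family (φ_λ)_{λ∈Λ} of linear functionals on V such that φ_λ(e_μ) ≥ 0 whenever λ ≠ μ. Define x ≤ y iff every coordinate of x (with respect to the basis) is at most the corresponding coordinate of y, and call v nef if φ_λ(v) ≥ 0 for all λ. If x₁, …, x_r are all nef, then the coordinatewise maximum max{x₁,…,x_r} (the vector whose λ-coordinate is max of the λ-coordinates of the x_i) is also nef. -/
/-!
Fix `l` and pick `i` with `x i` attaining the maximum in the `l`-th coordinate. Then `y - x i` has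
nonnegative coordinates and vanishing `l`-th coordinate, so `φ l (y - x i)` is a nonnegative
combination of the values `φ l (B m)` with `m ≠ l`; hence `φ l y ≥ φ l (x i) ≥ 0`.
-/

namespace Module.Basis

variable {R Λ V : Type*} [CommRing R] [PartialOrder R] [IsOrderedRing R]
  [AddCommGroup V] [Module R V]

theorem apply_nonneg_of_repr_nonneg (B : Basis Λ R V) (f : V →ₗ[R] R) {l : Λ}
    (hf : ∀ m, m ≠ l → 0 ≤ f (B m)) {z : V} (hz : ∀ m, 0 ≤ B.repr z m)
    (hzl : B.repr z l = 0) : 0 ≤ f z := by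
  rw [← B.linearCombination_repr z, Finsupp.linearCombination_apply, Finsupp.sum, map_sum]
  refine Finset.sum_nonneg fun m _ => ?_
  rw [map_smul]
  rcases eq_or_ne m l with rfl | hml
  · simp [hzl]
  · exact smul_nonneg (hz m) (hf m hml)

theorem apply_le_apply_of_repr_le (B : Basis Λ R V) (f : V →ₗ[R] R) {l : Λ}
    (hf : ∀ m, m ≠ l → 0 ≤ f (B m)) {x y : V} (hxy : ∀ m, B.repr x m ≤ B.repr y m)
    (hl : B.repr x l = B.repr y l) : f x ≤ f y := by
  have h := B.apply_nonneg_of_repr_nonneg f hf (z := y - x)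
    (fun m => by simpa using hxy m) (by simp [hl])
  rwa [map_sub, sub_nonneg] at h

end Module.Basis

theorem stmt0 {Λ V : Type*} [AddCommGroup V] [Module ℝ V]
    (B : Module.Basis Λ ℝ V) (φ : Λ → V →ₗ[ℝ] ℝ)
    (hφ : ∀ l m : Λ, l ≠ m → 0 ≤ φ l (B m))
    (r : ℕ) (x : Fin (r + 1) → V)
    (hx : ∀ i, ∀ l, 0 ≤ φ l (x i))
    (y : V)
    (hy : ∀ l : Λ, B.repr y l =
      Finset.univ.sup' Finset.univ_nonempty (fun i => B.repr (x i) l)) :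
    ∀ l, 0 ≤ φ l y := by
  intro l
  obtain ⟨i, -, hi⟩ := Finset.exists_mem_eq_sup' Finset.univ_nonempty
    (fun i => B.repr (x i) l)
  have hle : ∀ m, B.repr (x i) m ≤ B.repr y m := fun m => by
    rw [hy m]
    exact Finset.le_sup' (fun j => B.repr (x j) m) (Finset.mem_univ i)
  calc 0 ≤ φ l (x i) := hx i l
    _ ≤ φ l y := B.apply_le_apply_of_repr_le (φ l) (fun m hm => hφ l m hm.symm) hle
        (by rw [hy l, hi])
end

section
/- Let W be a real vector space, e₁,…,e_n ∈ W and φ₁,…,φ_n linear functionals on W satisfying: (a) the only tuple of nonnegative reals (a₁,…,a_n) with Σ a_i e_i = 0 is zero; (b) φ_i(e_j) ≥ 0 for all i ≠ j; (c) the only x ∈ ℝ_{≥0}e₁ + ⋯ + ℝ_{≥0}e_n with φ_i(x) ≥ 0 for all i is 0. Then the n×n matrix Q with entries Q_{ij} = φ_i(e_j) satisfies (−1)ⁿ det Q > 0. -/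
open Matrix

lemma key_mmatrix : ∀ (n : ℕ) (M : Matrix (Fin n) (Fin n) ℝ),
    (∀ i j, i ≠ j → M i j ≤ 0) →
    (∀ a : Fin n → ℝ, (∀ i, 0 ≤ a i) → (∀ i, M.mulVec a i ≤ 0) → ∀ i, a i = 0) →
    0 < M.det := by
  intro n
  induction n with
  | zero => intro M _ _; simp [Matrix.det_fin_zero]
  | succ n ih =>
    intro M hoff h
    set eqv : Fin n ⊕ Fin 1 ≃ Fin (n+1) := finSumFinEquiv with heqv
    have heqr : ∀ i : Fin 1, eqv (Sum.inr i) = Fin.last n := by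
      intro i
      have : i = 0 := Subsingleton.elim _ _
      subst this
      ext
      simp [heqv, finSumFinEquiv_apply_right]
    have heql : ∀ i : Fin n, eqv (Sum.inl i) ≠ Fin.last n := by
      intro i hcontr
      have := congrArg Fin.val hcontr
      simp [heqv, finSumFinEquiv_apply_left] at this
      omega
    set d : ℝ := M (Fin.last n) (Fin.last n) with hd
    have hdpos : 0 < d := by
      by_contra hdn
      push_neg at hdn
      have h1 := h (Pi.single (Fin.last n) 1)
        (fun i => by
          rcases eq_or_ne i (Fin.last n) with rfl | hne
          · simp
          · simp [Pi.single_eq_of_ne hne])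
        (fun i => by
          have : M.mulVec (Pi.single (Fin.last n) 1) i = M i (Fin.last n) := by
            simp [Matrix.mulVec_single]
          rw [this]
          rcases eq_or_ne i (Fin.last n) with rfl | hne
          · exact hdn
          · exact hoff i _ hne)
      have := h1 (Fin.last n)
      simp at this
    set N : Matrix (Fin n ⊕ Fin 1) (Fin n ⊕ Fin 1) ℝ := M.submatrix eqv eqv with hN
    set A := N.toBlocks₁₁ with hA
    set B := N.toBlocks₁₂ with hB
    set C := N.toBlocks₂₁ with hC
    set D := N.toBlocks₂₂ with hD
    have hAval : ∀ i j, A i j = M (eqv (Sum.inl i)) (eqv (Sum.inl j)) := fun i j => rfl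
    have hBval : ∀ (i : Fin n) (j : Fin 1), B i j = M (eqv (Sum.inl i)) (Fin.last n) := by
      intro i j; simp [hB, Matrix.toBlocks₁₂, hN, heqr]
    have hCval : ∀ (i : Fin 1) (j : Fin n), C i j = M (Fin.last n) (eqv (Sum.inl j)) := by
      intro i j; simp [hC, Matrix.toBlocks₂₁, hN, heqr]
    have hDval : ∀ i j : Fin 1, D i j = d := by
      intro i j; simp [hD, Matrix.toBlocks₂₂, hN, heqr, hd]
    have hBneg : ∀ (i : Fin n) (j : Fin 1), B i j ≤ 0 := by
      intro i j; rw [hBval]; exact hoff _ _ (heql i)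
    have hCneg : ∀ (i : Fin 1) (j : Fin n), C i j ≤ 0 := by
      intro i j; rw [hCval]; exact hoff _ _ (fun hcontr => heql j hcontr.symm)
    haveI : Invertible D := D.invertibleOfIsUnitDet (by
      rw [Matrix.det_fin_one, hDval]
      exact isUnit_iff_ne_zero.2 (ne_of_gt hdpos))
    have hinv : ⅟D = Matrix.of (fun _ _ : Fin 1 => d⁻¹) := by
      apply invOf_eq_right_inv
      ext i j
      have hij : i = j := Subsingleton.elim _ _
      subst hij
      simp [Matrix.mul_apply, Fin.sum_univ_one, hDval, Matrix.one_apply,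
        mul_inv_cancel₀ (ne_of_gt hdpos)]
    set M' := A - B * ⅟D * C with hM'
    have hBC : ∀ i j, (B * ⅟D * C) i j = B i 0 * d⁻¹ * C 0 j := by
      intro i j
      rw [hinv]
      simp [Matrix.mul_apply, Fin.sum_univ_one]
    have hoff' : ∀ i j, i ≠ j → M' i j ≤ 0 := by
      intro i j hij
      have h1 : A i j ≤ 0 := by
        rw [hAval]
        exact hoff _ _ (fun hcontr => hij (Sum.inl.inj (eqv.injective hcontr)))
      have h2 : 0 ≤ B i 0 * d⁻¹ * C 0 j := by
        have hx : B i 0 * d⁻¹ ≤ 0 :=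
          mul_nonpos_iff.2 (Or.inr ⟨hBneg i 0, le_of_lt (inv_pos.2 hdpos)⟩)
        have := mul_nonneg (neg_nonneg.2 hx) (neg_nonneg.2 (hCneg 0 j))
        rwa [neg_mul_neg] at this
      rw [hM']
      simp only [Matrix.sub_apply]
      rw [hBC]
      linarith
    have hcond' : ∀ a' : Fin n → ℝ, (∀ i, 0 ≤ a' i) → (∀ i, M'.mulVec a' i ≤ 0) →
        ∀ i, a' i = 0 := by
      intro a' hnn hle
      set s : ℝ := -(d⁻¹ * ∑ j, C 0 j * a' j) with hs
      have hsum_nonpos : (∑ j, C 0 j * a' j) ≤ 0 :=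
        Finset.sum_nonpos fun j _ => mul_nonpos_iff.2 (Or.inr ⟨hCneg 0 j, hnn j⟩)
      have hsnn : 0 ≤ s := by
        rw [hs]
        have : d⁻¹ * ∑ j, C 0 j * a' j ≤ 0 :=
          mul_nonpos_iff.2 (Or.inl ⟨le_of_lt (inv_pos.2 hdpos), hsum_nonpos⟩)
        linarith
      set a : Fin (n+1) → ℝ := fun i => Sum.elim a' (fun _ => s) (eqv.symm i) with haa
      have haval : ∀ x, a (eqv x) = Sum.elim a' (fun _ => s) x := by
        intro x; rw [haa]; simp
      have key0 : ∀ x : Fin n ⊕ Fin 1,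
          M.mulVec a (eqv x) = ∑ y, N x y * Sum.elim a' (fun _ => s) y := by
        intro x
        rw [Matrix.mulVec, dotProduct, ← Equiv.sum_comp eqv
          (fun j => M (eqv x) j * a j)]
        refine Finset.sum_congr rfl fun y _ => ?_
        rw [haval]
        rfl
      have hMa : ∀ i, M.mulVec a i ≤ 0 := by
        intro i
        obtain ⟨x, rfl⟩ := eqv.surjective i
        rw [key0, Fintype.sum_sum_type]
        rcases x with k | k
        · simp only [Sum.elim_inl, Sum.elim_inr, Fin.sum_univ_one]
          have heq : (∑ y : Fin n, N (Sum.inl k) (Sum.inl y) * a' y)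
              + N (Sum.inl k) (Sum.inr 0) * s = M'.mulVec a' k := by
            rw [hM', Matrix.sub_mulVec]
            simp only [Pi.sub_apply]
            have h2 : (B * ⅟D * C).mulVec a' k = B k 0 * d⁻¹ * ∑ j, C 0 j * a' j := by
              rw [Matrix.mulVec, dotProduct, Finset.mul_sum]
              refine Finset.sum_congr rfl fun j _ => ?_
              rw [hBC]; ring
            rw [h2]
            have h3 : A.mulVec a' k = ∑ y : Fin n, N (Sum.inl k) (Sum.inl y) * a' y := rfl
            rw [h3, hs]
            have h4 : N (Sum.inl k) (Sum.inr 0) = B k 0 := rfl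
            rw [h4]
            ring
          rw [heq]
          exact hle k
        · have hk : k = (0 : Fin 1) := Subsingleton.elim _ _
          subst hk
          simp only [Sum.elim_inl, Sum.elim_inr, Fin.sum_univ_one]
          have h4 : N (Sum.inr 0) (Sum.inr 0) = d := hDval 0 0
          have h5 : ∀ y, N (Sum.inr (0 : Fin 1)) (Sum.inl y) = C 0 y := fun y => rfl
          rw [h4]
          have : (∑ y : Fin n, N (Sum.inr 0) (Sum.inl y) * a' y) = ∑ j, C 0 j * a' j := by
            exact Finset.sum_congr rfl fun y _ => by rw [h5]
          rw [this, hs]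
          have : d * -(d⁻¹ * ∑ j, C 0 j * a' j) = -(∑ j, C 0 j * a' j) := by
            field_simp
          rw [this]
          linarith
      have ha0 := h a (fun i => by
        obtain ⟨x, rfl⟩ := eqv.surjective i
        rw [haval]
        rcases x with k | k
        · exact hnn k
        · exact hsnn) hMa
      intro i
      have := ha0 (eqv (Sum.inl i))
      rwa [haval] at this
    have ihM' := ih M' hoff' hcond'
    have hdet : M.det = d * M'.det := by
      have h1 : N.det = M.det := Matrix.det_submatrix_equiv_self eqv M
      have h2 : N = Matrix.fromBlocks A B C D := (Matrix.fromBlocks_toBlocks N).symm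
      rw [← h1, h2, Matrix.det_fromBlocks₂₂, Matrix.det_fin_one, hDval]
    rw [hdet]
    exact mul_pos hdpos ihM'

theorem stmt2 {W : Type*} [AddCommGroup W] [Module ℝ W]
    (n : ℕ) (e : Fin n → W) (φ : Fin n → W →ₗ[ℝ] ℝ)
    (ha : ∀ a : Fin n → ℝ, (∀ i, 0 ≤ a i) → ∑ i, a i • e i = 0 → ∀ i, a i = 0)
    (hb : ∀ i j, i ≠ j → 0 ≤ φ i (e j))
    (hc : ∀ x : W, (∃ a : Fin n → ℝ, (∀ i, 0 ≤ a i) ∧ x = ∑ i, a i • e i) →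
      (∀ i, 0 ≤ φ i x) → x = 0) :
    0 < (-1 : ℝ) ^ n * Matrix.det (Matrix.of fun i j => φ i (e j)) := by
  set Q : Matrix (Fin n) (Fin n) ℝ := Matrix.of fun i j => φ i (e j) with hQ
  have key := key_mmatrix n (-Q)
    (fun i j hij => by simpa [hQ] using hb i j hij)
    (fun a hann hma => by
      have hx : ∀ i, Q.mulVec a i = φ i (∑ j, a j • e j) := by
        intro i
        simp [hQ, Matrix.mulVec, dotProduct, map_sum, _root_.map_smul, smul_eq_mul, mul_comm]
      have hx0 : (∑ j, a j • e j) = 0 := by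
        apply hc _ ⟨a, hann, rfl⟩
        intro i
        have := hma i
        rw [Matrix.neg_mulVec] at this
        simp only [Pi.neg_apply, neg_nonpos] at this
        rw [← hx i]; exact this
      exact ha a hann hx0)
  have hdn : (-Q).det = (-1 : ℝ) ^ n * Q.det := by
    rw [Matrix.det_neg]
    simp
  rw [hdn] at key
  exact key
end

section
/- Let W be a real vector space, e₁,…,e_n ∈ W and φ₁,…,φ_n linear functionals on W satisfying: (a) the only tuple of nonnegative reals (a₁,…,a_n) with Σ a_i e_i = 0 is zero; (b) φ_i(e_j) ≥ 0 for all i ≠ j; (c) the only x ∈ ℝ_{≥0}e₁ + ⋯ + ℝ_{≥0}e_n with φ_i(x) ≥ 0 for all i is 0. If moreover the matrix (φ_i(e_j)) is symmetric, then it is negative definite. -/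
/-!
Maximize the quadratic form `x ↦ xᵀ Q x` of `Q = (φ_i(e_j))` on the unit sphere, at `w` with
value `M`. Since the off-diagonal entries of `Q` are nonnegative, `|w|` is a maximizer as well,
and for symmetric `Q` a maximizer is an eigenvector: `Q |w| = M |w|`. If `M ≥ 0`, then
`x = ∑ |w_j| e_j` lies in the cone spanned by the `e_i` and has `φ_i(x) = M |w_i| ≥ 0`, so `x = 0`
by (c) and `|w| = 0` by (a), which is absurd. Hence `xᵀ Q x ≤ M ‖x‖² < 0` for `x ≠ 0`.
-/

open Matrix

namespace Matrix

variable {ι : Type*} [Fintype ι]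

theorem isCompact_setOf_dotProduct_self_eq_one :
    IsCompact {x : ι → ℝ | x ⬝ᵥ x = 1} := by
  refine Metric.isCompact_of_isClosed_isBounded (isClosed_eq (by fun_prop) continuous_const) ?_
  refine (Metric.isBounded_closedBall (x := 0) (r := 1)).subset fun x hx => ?_
  rw [mem_closedBall_zero_iff, pi_norm_le_iff_of_nonneg zero_le_one]
  intro i
  have hi : x i * x i ≤ x ⬝ᵥ x :=
    Finset.single_le_sum (f := fun j => x j * x j) (fun j _ => mul_self_nonneg _)
      (Finset.mem_univ i)
  rw [Real.norm_eq_abs]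
  nlinarith [abs_mul_abs_self (x i), abs_nonneg (x i), hx.symm]

theorem dotProduct_self_pos {x : ι → ℝ} (hx : x ≠ 0) : 0 < x ⬝ᵥ x := by
  simpa using dotProduct_star_self_pos_iff.mpr hx

theorem exists_forall_dotProduct_mulVec_le_mul [Nonempty ι] (Q : Matrix ι ι ℝ) :
    ∃ w : ι → ℝ, w ⬝ᵥ w = 1 ∧ ∀ x, x ⬝ᵥ Q *ᵥ x ≤ (w ⬝ᵥ Q *ᵥ w) * (x ⬝ᵥ x) := by
  classical
  obtain ⟨i⟩ := ‹Nonempty ι›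
  obtain ⟨w, hw, hmax⟩ := isCompact_setOf_dotProduct_self_eq_one.exists_isMaxOn
    ⟨Pi.single i 1, by simp⟩ (f := fun x : ι → ℝ => x ⬝ᵥ Q *ᵥ x) (by fun_prop)
  refine ⟨w, hw, fun x => ?_⟩
  rcases eq_or_ne x 0 with rfl | hx
  · simp
  set c := √(x ⬝ᵥ x)
  have hc : c ^ 2 = x ⬝ᵥ x := Real.sq_sqrt (dotProduct_self_pos hx).le
  have hc0 : 0 < c := Real.sqrt_pos.mpr (dotProduct_self_pos hx)
  have hy : (c⁻¹ • x) ⬝ᵥ Q *ᵥ (c⁻¹ • x) ≤ w ⬝ᵥ Q *ᵥ w := hmax (a := c⁻¹ • x) (by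
    simp only [Set.mem_ofPred_eq, smul_dotProduct, dotProduct_smul, smul_eq_mul, ← hc]
    field_simp)
  simp only [mulVec_smul, smul_dotProduct, dotProduct_smul, smul_eq_mul] at hy
  rw [← hc]
  field_simp at hy
  linarith

theorem dotProduct_mulVec_le_abs {Q : Matrix ι ι ℝ} (hQ : ∀ i j, i ≠ j → 0 ≤ Q i j)
    (x : ι → ℝ) : x ⬝ᵥ Q *ᵥ x ≤ |x| ⬝ᵥ Q *ᵥ |x| := by
  simp only [dotProduct, mulVec, Finset.mul_sum, Pi.abs_apply]
  refine Finset.sum_le_sum fun i _ => Finset.sum_le_sum fun j _ => ?_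
  rcases eq_or_ne i j with rfl | hij
  · exact le_of_eq (by linear_combination -(Q i i) * abs_mul_abs_self (x i))
  · nlinarith [hQ i j hij, le_abs_self (x i * x j), abs_mul (x i) (x j)]

/-- `M • 1 - Q` is positive semidefinite, and a positive semidefinite matrix kills every vector
on which its quadratic form vanishes. -/
theorem mulVec_eq_smul_of_dotProduct_mulVec_le {Q : Matrix ι ι ℝ} (hQ : Q.IsSymm) {M : ℝ}
    (hM : ∀ x, x ⬝ᵥ Q *ᵥ x ≤ M * (x ⬝ᵥ x)) {u : ι → ℝ} (hu : u ⬝ᵥ Q *ᵥ u = M * (u ⬝ᵥ u)) :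
    Q *ᵥ u = M • u := by
  classical
  have hpsd : (M • 1 - Q).PosSemidef := by
    refine .of_dotProduct_mulVec_nonneg ?_ fun x => ?_
    · simp [isHermitian_iff_isSymm, IsSymm, transpose_sub, hQ.eq]
    · simpa [sub_mulVec, smul_mulVec, dotProduct_sub] using hM x
  have hker := (hpsd.dotProduct_mulVec_zero_iff u).mp (by
    simp [sub_mulVec, smul_mulVec, dotProduct_sub, hu])
  rw [sub_mulVec, smul_mulVec, one_mulVec, sub_eq_zero] at hker
  exact hker.symm

theorem posDef_neg_of_isSymm_of_offDiag_nonneg {Q : Matrix ι ι ℝ} (hsym : Q.IsSymm)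
    (hoff : ∀ i j, i ≠ j → 0 ≤ Q i j) (hcone : ∀ u, 0 ≤ u → 0 ≤ Q *ᵥ u → u = 0) :
    (-Q).PosDef := by
  refine posDef_iff_dotProduct_mulVec.mpr ⟨by simpa [isHermitian_iff_isSymm] using hsym, ?_⟩
  intro v hv
  obtain ⟨i, -⟩ := Function.ne_iff.mp hv
  have : Nonempty ι := ⟨i⟩
  obtain ⟨w, hw, hmax⟩ := exists_forall_dotProduct_mulVec_le_mul Q
  set M := w ⬝ᵥ Q *ᵥ w
  have hu : |w| ⬝ᵥ |w| = 1 := by simpa [dotProduct, Pi.abs_apply, abs_mul_abs_self] using hw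
  have hQu : Q *ᵥ |w| = M • |w| := by
    refine mulVec_eq_smul_of_dotProduct_mulVec_le hsym hmax (le_antisymm (hmax _) ?_)
    simpa [hu] using dotProduct_mulVec_le_abs hoff w
  have hM : M < 0 := by
    by_contra! hM_nonneg
    have hw0 := hcone |w| (abs_nonneg w) (hQu ▸ smul_nonneg hM_nonneg (abs_nonneg w))
    simp [hw0] at hu
  have hvQv := hmax v
  simp only [star_trivial, neg_mulVec, dotProduct_neg, neg_pos]
  nlinarith [dotProduct_self_pos hv]

end Matrix

theorem stmt3 {W : Type*} [AddCommGroup W] [Module ℝ W]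
    (n : ℕ) (e : Fin n → W) (φ : Fin n → W →ₗ[ℝ] ℝ)
    (ha : ∀ a : Fin n → ℝ, (∀ i, 0 ≤ a i) → ∑ i, a i • e i = 0 → ∀ i, a i = 0)
    (hb : ∀ i j, i ≠ j → 0 ≤ φ i (e j))
    (hc : ∀ x : W, (∃ a : Fin n → ℝ, (∀ i, 0 ≤ a i) ∧ x = ∑ i, a i • e i) →
      (∀ i, 0 ≤ φ i x) → x = 0)
    (hsym : ∀ i j, φ i (e j) = φ j (e i)) :
    ∀ v : Fin n → ℝ, v ≠ 0 → (∑ i, ∑ j, v i * φ i (e j) * v j) < 0 := by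
  set Q : Matrix (Fin n) (Fin n) ℝ := .of fun i j => φ i (e j)
  have hQ : ∀ u i, (Q *ᵥ u) i = φ i (∑ j, u j • e j) := fun u i => by
    simp [Q, mulVec, dotProduct, mul_comm]
  have hcone : ∀ u, 0 ≤ u → 0 ≤ Q *ᵥ u → u = 0 := fun u hu hQu =>
    funext <| ha u hu <| hc _ ⟨u, hu, rfl⟩ fun i => hQu i |>.trans_eq (hQ u i)
  have hneg : (-Q).PosDef :=
    posDef_neg_of_isSymm_of_offDiag_nonneg (IsSymm.ext fun i j => hsym j i) hb hcone
  intro v hv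
  have hvQv := hneg.dotProduct_mulVec_pos hv
  rw [star_trivial, neg_mulVec, dotProduct_neg, neg_pos] at hvQv
  simpa [dotProduct, mulVec, Finset.mul_sum, mul_assoc, Q] using hvQv
end

section
/- Let W be a real vector space, e₁,…,e_n ∈ W and φ₁,…,φ_n linear functionals on W satisfying conditions (a), (b), (c) as follows: (a) the only tuple of nonnegative reals (a₁,…,a_n) with Σ a_i e_i = 0 is zero; (b) φ_i(e_j) ≥ 0 for all i ≠ j; (c) the only x ∈ ℝ_{≥0}e₁ + ⋯ + ℝ_{≥0}e_n with φ_i(x) ≥ 0 for all i is 0. Then the images of e₁,…,e_n in the quotient W / {x ∈ W : φ₁(x) = ⋯ = φ_n(x) = 0} are linearly independent. -/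
theorem stmt4 {W : Type*} [AddCommGroup W] [Module ℝ W]
    (n : ℕ) (e : Fin n → W) (φ : Fin n → W →ₗ[ℝ] ℝ)
    (ha : ∀ a : Fin n → ℝ, (∀ i, 0 ≤ a i) → ∑ i, a i • e i = 0 → ∀ i, a i = 0)
    (hb : ∀ i j, i ≠ j → 0 ≤ φ i (e j))
    (hc : ∀ x : W, (∃ a : Fin n → ℝ, (∀ i, 0 ≤ a i) ∧ x = ∑ i, a i • e i) →
      (∀ i, 0 ≤ φ i x) → x = 0) :
    ∀ b : Fin n → ℝ, (∀ i, φ i (∑ j, b j • e j) = 0) → ∀ i, b i = 0 := by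
  have key : ∀ b : Fin n → ℝ, (∀ i, φ i (∑ j, b j • e j) = 0) → ∀ i, b i ≤ 0 := by
    intro b hb0 i
    set p : Fin n → ℝ := fun j => max (b j) 0 with hp
    set m : Fin n → ℝ := fun j => max (-(b j)) 0 with hm
    have hpnn : ∀ j, 0 ≤ p j := fun j => le_max_right _ _
    have hmnn : ∀ j, 0 ≤ m j := fun j => le_max_right _ _
    have hpm : ∀ j, b j = p j - m j := by
      intro j
      simp [hp, hm, max_def]
      split_ifs with h1 h2 h2 <;> linarith
    have hsum : (∑ j, p j • e j) - (∑ j, m j • e j) = ∑ j, b j • e j := by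
      rw [← Finset.sum_sub_distrib]
      congr 1; ext j; rw [hpm j, sub_smul]
    have heq : ∀ k, φ k (∑ j, p j • e j) = φ k (∑ j, m j • e j) := by
      intro k
      have := hb0 k
      rw [← hsum, map_sub] at this
      linarith
    have hx : ∀ k, 0 ≤ φ k (∑ j, p j • e j) := by
      intro k
      by_cases hk : b k ≤ 0
      · have hpk : p k = 0 := by simp [hp, max_eq_right hk]
        rw [map_sum]
        apply Finset.sum_nonneg
        intro j _
        rw [map_smul, smul_eq_mul]
        by_cases hjk : j = k
        · simp [hjk, hpk]
        · exact mul_nonneg (hpnn j) (hb k j (Ne.symm hjk))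
      · push_neg at hk
        have hmk : m k = 0 := by simp [hm]; linarith
        rw [heq k, map_sum]
        apply Finset.sum_nonneg
        intro j _
        rw [map_smul, smul_eq_mul]
        by_cases hjk : j = k
        · simp [hjk, hmk]
        · exact mul_nonneg (hmnn j) (hb k j (Ne.symm hjk))
    have hx0 : (∑ j, p j • e j) = 0 := hc _ ⟨p, hpnn, rfl⟩ hx
    have := ha p hpnn hx0 i
    simp [hp, max_def] at this
    by_cases h : 0 < b i
    · linarith [this h]
    · linarith
  intro b hb0 i
  have h1 := key b hb0 i
  have h2 := key (fun j => -(b j)) (by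
    intro k
    have : (∑ j, -(b j) • e j) = -(∑ j, b j • e j) := by
      rw [← Finset.sum_neg_distrib]; congr 1; ext j; rw [neg_smul]
    rw [this, map_neg, hb0 k, neg_zero]) i
  simp at h2
  linarith
end

section
/- For integers 1 ≤ l ≤ d, in ℤ[X₁,…,X_d] one has Σ_{I ⊆ {1,…,d}} (−1)^{#I} (Σ_{i∈I} X_i)^l = 0 if l < d, and equals (−1)^d · d! · X₁⋯X_d if l = d. -/
open Finset

lemma neg_one_pow_sub' {R : Type*} [Ring R] {d k : ℕ} (h : k ≤ d) :
    ((-1 : R)) ^ (d - k) = (-1) ^ d * (-1) ^ k := by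
  rw [← pow_add]
  have : d + k = (d - k) + 2 * k := by omega
  rw [this, pow_add, pow_mul]
  simp

lemma supset_sum {d : ℕ} (T : Finset (Fin d)) :
    ∑ I : Finset (Fin d), (if T ⊆ I then ((-1 : ℤ)) ^ I.card else 0)
      = if T = Finset.univ then (-1) ^ d else 0 := by
  have hinv : Function.Bijective (fun I : Finset (Fin d) => Iᶜ) :=
    Function.Involutive.bijective compl_compl
  rw [← Function.Bijective.sum_comp hinv
    (fun I => if T ⊆ I then ((-1 : ℤ)) ^ I.card else 0)]
  simp only [Finset.card_compl, Fintype.card_fin]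
  have hcond : ∀ I : Finset (Fin d), (T ⊆ Iᶜ) ↔ (I ⊆ Tᶜ) := fun I =>
    Finset.subset_compl_comm
  calc ∑ I : Finset (Fin d), (if T ⊆ Iᶜ then ((-1:ℤ)) ^ (d - I.card) else 0)
      = ∑ I : Finset (Fin d), (if I ∈ Tᶜ.powerset then ((-1:ℤ))^d * (-1) ^ I.card else 0) := by
        refine Finset.sum_congr rfl fun I _ => ?_
        simp only [Finset.mem_powerset]
        by_cases h : T ⊆ Iᶜ
        · rw [if_pos h, if_pos ((hcond I).1 h), neg_one_pow_sub' (by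
            simpa using Finset.card_le_card (Finset.subset_univ I))]
        · rw [if_neg h, if_neg (fun hI => h ((hcond I).2 hI))]
    _ = (-1:ℤ)^d * ∑ I ∈ Tᶜ.powerset, (-1) ^ I.card := by
        rw [Finset.sum_ite_mem, Finset.univ_inter, Finset.mul_sum]
    _ = if T = Finset.univ then (-1) ^ d else 0 := by
        rw [Finset.sum_powerset_neg_one_pow_card]
        by_cases h : T = Finset.univ
        · simp [h]
        · rw [if_neg h, if_neg (by simpa [Finset.compl_eq_empty_iff] using h)]
          ring

open MvPolynomial in
theorem stmt6 (d l : ℕ) (hl : 1 ≤ l) (hld : l ≤ d) :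
    (l < d →
      ∑ I : Finset (Fin d), (-1) ^ I.card * (∑ i ∈ I, (X i : MvPolynomial (Fin d) ℤ)) ^ l = 0) ∧
    (l = d →
      ∑ I : Finset (Fin d), (-1) ^ I.card * (∑ i ∈ I, (X i : MvPolynomial (Fin d) ℤ)) ^ l =
        (-1) ^ d * (d.factorial : MvPolynomial (Fin d) ℤ) * ∏ i, X i) := by
  classical
  set R := MvPolynomial (Fin d) ℤ
  have hsup : ∀ T : Finset (Fin d),
      ∑ I : Finset (Fin d), (if T ⊆ I then ((-1 : R)) ^ I.card else 0)
        = if T = Finset.univ then (-1) ^ d else 0 := by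
    intro T
    have hcast : ∀ (c : Prop) [Decidable c] (k : ℕ),
        (if c then ((-1:R))^k else 0) = (((if c then (-1:ℤ)^k else 0 : ℤ)) : R) := by
      intros c _ k; split <;> push_cast <;> ring
    simp only [hcast]
    rw [← Int.cast_sum, supset_sum T]
  have key : ∑ I : Finset (Fin d), (-1) ^ I.card * (∑ i ∈ I, (X i : R)) ^ l
      = ∑ p : Fin l → Fin d,
          ((if Finset.image p Finset.univ = Finset.univ then ((-1 : R)) ^ d else 0)
            * ∏ j, X (p j)) := by
    calc ∑ I : Finset (Fin d), (-1) ^ I.card * (∑ i ∈ I, (X i : R)) ^ l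
        = ∑ I : Finset (Fin d), ∑ p : Fin l → Fin d,
            (if Finset.image p Finset.univ ⊆ I then ((-1:R)) ^ I.card * ∏ j, X (p j) else 0) := by
          refine Finset.sum_congr rfl fun I _ => ?_
          rw [Finset.sum_pow' I (fun i => (X i : R)) l, Finset.mul_sum]
          symm
          calc ∑ p : Fin l → Fin d,
                (if Finset.image p Finset.univ ⊆ I then ((-1:R)) ^ I.card * ∏ j, X (p j) else 0)
              = ∑ p : Fin l → Fin d,
                (if p ∈ Fintype.piFinset (fun _ : Fin l => I) then
                  ((-1:R)) ^ I.card * ∏ j, X (p j) else 0) :=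
                Finset.sum_congr rfl fun p _ => if_congr
                  (by simp [Fintype.mem_piFinset, Finset.image_subset_iff]) rfl rfl
            _ = _ := by rw [Finset.sum_ite_mem, Finset.univ_inter]
      _ = ∑ p : Fin l → Fin d, ∑ I : Finset (Fin d),
            (if Finset.image p Finset.univ ⊆ I then ((-1:R)) ^ I.card else 0) * ∏ j, X (p j) := by
          rw [Finset.sum_comm]
          exact Finset.sum_congr rfl fun p _ => Finset.sum_congr rfl fun I _ => by
            rw [ite_mul, zero_mul]
      _ = ∑ p : Fin l → Fin d,
          ((if Finset.image p Finset.univ = Finset.univ then ((-1 : R)) ^ d else 0)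
            * ∏ j, X (p j)) := by
          refine Finset.sum_congr rfl fun p _ => ?_
          rw [← Finset.sum_mul, hsup]
  constructor
  · intro hlt
    rw [key]
    refine Finset.sum_eq_zero fun p _ => ?_
    have : Finset.image p Finset.univ ≠ Finset.univ := by
      intro h
      have h1 : (Finset.image p Finset.univ).card ≤ l := by
        simpa using Finset.card_image_le (s := (Finset.univ : Finset (Fin l))) (f := p)
      rw [h] at h1
      simp only [Finset.card_univ, Fintype.card_fin] at h1
      omega
    rw [if_neg this, zero_mul]
  · intro hle
    subst hle
    rw [key]
    have hbij : ∀ p : Fin l → Fin l, Finset.image p Finset.univ = Finset.univ ↔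
        Function.Bijective p := by
      intro p
      rw [← Finite.surjective_iff_bijective]
      simp only [Finset.eq_univ_iff_forall, Finset.mem_image, Finset.mem_univ, true_and]
      exact Iff.rfl
    have himg : (Finset.univ.image (fun e : Equiv.Perm (Fin l) => ⇑e))
        = Finset.univ.filter (fun p => Function.Bijective p) := by
      ext p
      simp only [Finset.mem_image, Finset.mem_univ, true_and, Finset.mem_filter]
      constructor
      · rintro ⟨e, rfl⟩; exact e.bijective
      · intro h; exact ⟨Equiv.ofBijective p h, rfl⟩
    calc ∑ p : Fin l → Fin l,
          ((if Finset.image p Finset.univ = Finset.univ then ((-1 : R)) ^ l else 0)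
            * ∏ j, X (p j))
        = ∑ p ∈ Finset.univ.filter (fun p : Fin l → Fin l => Function.Bijective p),
            ((-1 : R)) ^ l * ∏ j, X (p j) := by
          rw [Finset.sum_filter]
          refine Finset.sum_congr rfl fun p _ => ?_
          by_cases h : Function.Bijective p
          · rw [if_pos ((hbij p).2 h), if_pos h]
          · rw [if_neg (fun hc => h ((hbij p).1 hc)), if_neg h, zero_mul]
      _ = ∑ e : Equiv.Perm (Fin l), ((-1 : R)) ^ l * ∏ j, X (e j) := by
          rw [← himg, Finset.sum_image (fun e _ f _ h => DFunLike.coe_injective h)]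
      _ = ∑ e : Equiv.Perm (Fin l), ((-1 : R)) ^ l * ∏ i, X i := by
          refine Finset.sum_congr rfl fun e _ => ?_
          rw [Equiv.prod_comp e (fun i => (X i : R))]
      _ = (-1) ^ l * (l.factorial : R) * ∏ i, X i := by
          rw [Finset.sum_const, Finset.card_univ, Fintype.card_perm, Fintype.card_fin,
            nsmul_eq_mul]
          ring
end

section
/- Let (R, ≤) be an ordered structure on a real vector space V induced by a basis (e_λ) (x ≤ y iff all coordinates of x are ≤ those of y), and let φ_λ be linear functionals with φ_λ(e_μ) ≥ 0 for λ ≠ μ. Suppose x ∈ V admits a Zariski decomposition x = y + z, i.e.: y is nef (φ_λ(y) ≥ 0 for all λ), z ≥ 0, φ_λ(y) = 0 for every λ in the support of z, and the only element w of the cone Σ_{λ ∈ Supp(z)} ℝ_{≥0} e_λ with φ_λ(w) ≥ 0 for all λ ∈ Supp(z) is w = 0. Then this decomposition is unique: if x = y' + z' is another decomposition with the same four properties, then y = y' and z = z'. -/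
/-- `x = y + z` is a Zariski decomposition with respect to the system given by the basis `B`
and the linear functionals `φ`: `y` is nef, `z` is coordinatewise nonnegative,
`φ l y = 0` for every `l` in the support of `z`, and the only coordinatewise nonnegative
vector supported in the support of `z` on which all the `φ l` (`l` in the support of `z`)
are nonnegative is `0`. -/
def IsZariskiDecomposition {Λ V : Type*} [AddCommGroup V] [Module ℝ V]
    (B : Module.Basis Λ ℝ V) (φ : Λ → V →ₗ[ℝ] ℝ) (x y z : V) : Prop :=
  x = y + z ∧
  (∀ l, 0 ≤ φ l y) ∧
  (∀ l, 0 ≤ B.repr z l) ∧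
  (∀ l, B.repr z l ≠ 0 → φ l y = 0) ∧
  (∀ w : V, (∀ l, 0 ≤ B.repr w l) → (∀ l, B.repr w l ≠ 0 → B.repr z l ≠ 0) →
    (∀ l, B.repr z l ≠ 0 → 0 ≤ φ l w) → w = 0)

/- The negative part `z` of a Zariski decomposition is minimal among the
negative parts `z'` of decompositions `x = y' + z'` with `y'` nef and `z' ≥ 0`; uniqueness then
follows by antisymmetry. For minimality, split `z - z' = y' - y` as `p - n` into its coordinatewise
positive and negative parts. On the support of `z`, `φ l` is nonnegative on `p`: off the support
of `p` because `φ l (B m) ≥ 0` for `m ≠ l`, and on it because there `n` vanishes at `l`, so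
`φ l p = φ l y' - φ l y + φ l n ≥ 0`. Since the support of `p` lies in that of `z`, the maximality
condition on `z` forces `p = 0`, i.e. `z ≤ z'`. -/

namespace Finsupp

variable {ι α : Type*} [Lattice α] [AddGroup α]

theorem posPart_apply (f : ι →₀ α) (i : ι) : f⁺ i = (f i)⁺ := rfl

theorem negPart_apply (f : ι →₀ α) (i : ι) : f⁻ i = (f i)⁻ := rfl

end Finsupp

theorem Module.Basis.map_nonneg_of_repr_nonneg_of_repr_eq_zero {Λ V : Type*} [AddCommGroup V]
    [Module ℝ V] (B : Module.Basis Λ ℝ V) {f : V →ₗ[ℝ] ℝ} {l : Λ}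
    (hf : ∀ m, m ≠ l → 0 ≤ f (B m)) {w : V} (hw : ∀ m, 0 ≤ B.repr w m) (hwl : B.repr w l = 0) :
    0 ≤ f w := by
  rw [← B.linearCombination_repr w, Finsupp.linearCombination_apply, map_finsuppSum]
  refine Finset.sum_nonneg fun m _ => ?_
  simp only [map_smul, smul_eq_mul]
  by_cases hml : m = l
  · simp [hml, hwl]
  · exact mul_nonneg (hw m) (hf m hml)

theorem IsZariskiDecomposition.repr_le {Λ V : Type*} [AddCommGroup V] [Module ℝ V]
    {B : Module.Basis Λ ℝ V} {φ : Λ → V →ₗ[ℝ] ℝ} (hφ : ∀ l m : Λ, l ≠ m → 0 ≤ φ l (B m))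
    {x y z y' z' : V} (h : IsZariskiDecomposition B φ x y z) (hx' : x = y' + z')
    (hy' : ∀ l, 0 ≤ φ l y') (hz' : ∀ l, 0 ≤ B.repr z' l) (l : Λ) :
    B.repr z l ≤ B.repr z' l := by
  obtain ⟨hx, -, -, hyz, hmax⟩ := h
  set d := B.repr z - B.repr z'
  set p := B.repr.symm d⁺
  set n := B.repr.symm d⁻
  have hp : ∀ l, B.repr p l = (B.repr z l - B.repr z' l)⁺ := fun l => by
    simp [p, d, Finsupp.posPart_apply]
  have hn : ∀ l, B.repr n l = (B.repr z l - B.repr z' l)⁻ := fun l => by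
    simp [n, d, Finsupp.negPart_apply]
  have hpn : p = y' - y + n := by
    have hd : p - n = z - z' := B.repr.injective (by simp [p, n, d, posPart_sub_negPart])
    have hyy : y' - y = z - z' := by
      rw [sub_eq_sub_iff_add_eq_add, ← hx', hx, add_comm]
    rw [hyy, ← hd]
    abel
  have hφp : ∀ l, B.repr z l ≠ 0 → 0 ≤ φ l p := fun l hl => by
    by_cases hpl : B.repr p l = 0
    · exact B.map_nonneg_of_repr_nonneg_of_repr_eq_zero (fun m hm => hφ l m hm.symm)
        (fun m => (hp m).symm ▸ posPart_nonneg _) hpl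
    · have hnl : B.repr n l = 0 := by
        rw [hp, posPart_eq_zero, not_le] at hpl
        rw [hn, negPart_eq_zero]
        exact hpl.le
      have hφn : 0 ≤ φ l n := B.map_nonneg_of_repr_nonneg_of_repr_eq_zero
        (fun m hm => hφ l m hm.symm) (fun m => (hn m).symm ▸ negPart_nonneg _) hnl
      rw [hpn, map_add, map_sub, hyz l hl]
      linarith [hy' l]
  have hsupp : ∀ l, B.repr p l ≠ 0 → B.repr z l ≠ 0 := fun l hpl hzl => by
    rw [hp, hzl, zero_sub] at hpl
    exact hpl (posPart_eq_zero.mpr (neg_nonpos.mpr (hz' l)))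
  have hp0 : p = 0 := hmax p (fun m => (hp m).symm ▸ posPart_nonneg _) hsupp hφp
  have := hp l
  rwa [hp0, map_zero, Finsupp.zero_apply, eq_comm, posPart_eq_zero, sub_nonpos] at this

theorem stmt17 {Λ V : Type*} [AddCommGroup V] [Module ℝ V]
    (B : Module.Basis Λ ℝ V) (φ : Λ → V →ₗ[ℝ] ℝ)
    (hφ : ∀ l m : Λ, l ≠ m → 0 ≤ φ l (B m))
    (x y z y' z' : V)
    (h : IsZariskiDecomposition B φ x y z)
    (h' : IsZariskiDecomposition B φ x y' z') :
    y = y' ∧ z = z' := by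
  have hzz' : z = z' := B.repr.injective <| Finsupp.ext fun l =>
    le_antisymm (h.repr_le hφ h'.1 h'.2.1 h'.2.2.1 l) (h'.repr_le hφ h.1 h.2.1 h.2.2.1 l)
  subst hzz'
  exact ⟨add_right_cancel (h.1.symm.trans h'.1), rfl⟩
end

section
/- With the setup of a system of Zariski decompositions (V a real vector space with basis (e_λ), functionals φ_λ with φ_λ(e_μ) ≥ 0 for λ ≠ μ), assume additionally that φ_λ(e_μ) ∈ ℚ for all λ, μ. Let x ∈ V have all coordinates rational and admit a Zariski decomposition x = y + z (y nef, z ≥ 0, φ_λ(y) = 0 for λ ∈ Supp(z), and the cone condition: the only w ∈ Σ_{λ∈Supp(z)} ℝ_{≥0}e_λ with φ_λ(w) ≥ 0 for all λ ∈ Supp(z) is w = 0). Then all coordinates of y and of z are rational. -/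
open Matrix

namespace Matrix

variable {n : Type*} [Fintype n]

section OffDiagNonneg

variable {R : Type*} [Ring R] [LinearOrder R] [IsOrderedRing R] {A : Matrix n n R}

theorem mulVec_apply_nonneg_of_offDiag_nonneg (hA : ∀ i j, i ≠ j → 0 ≤ A i j) {c : n → R}
    (hc : 0 ≤ c) {i : n} (hci : c i = 0) : 0 ≤ (A *ᵥ c) i :=
  Finset.sum_nonneg fun j _ => by
    rcases eq_or_ne i j with rfl | hij
    · simp [hci]
    · exact mul_nonneg (hA i j hij) (hc j)

theorem nonpos_of_mulVec_eq_zero_of_offDiag_nonneg (hA : ∀ i j, i ≠ j → 0 ≤ A i j)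
    (hcone : ∀ c, 0 ≤ c → 0 ≤ A *ᵥ c → c = 0) {v : n → R} (hv : A *ᵥ v = 0) : v ≤ 0 := by
  have hsplit : A *ᵥ v⁺ = A *ᵥ v⁻ := by
    rw [← sub_eq_zero, ← mulVec_sub, posPart_sub_negPart, hv]
  suffices v⁺ = 0 from posPart_eq_zero.1 this
  refine hcone _ (posPart_nonneg v) fun i => ?_
  rcases eq_or_ne (v⁺ i) 0 with hi | hi
  · exact mulVec_apply_nonneg_of_offDiag_nonneg hA (posPart_nonneg v) hi
  · have hvi : v⁻ i = 0 := negPart_eq_zero.2 (not_le.1 (mt posPart_eq_zero.2 hi)).le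
    rw [Pi.zero_apply, hsplit]
    exact mulVec_apply_nonneg_of_offDiag_nonneg hA (negPart_nonneg v) hvi

theorem mulVec_injective_of_offDiag_nonneg (hA : ∀ i j, i ≠ j → 0 ≤ A i j)
    (hcone : ∀ c, 0 ≤ c → 0 ≤ A *ᵥ c → c = 0) : Function.Injective A.mulVec := by
  intro v w hvw
  have hker : ∀ u, A *ᵥ u = 0 → u ≤ 0 := fun _ =>
    nonpos_of_mulVec_eq_zero_of_offDiag_nonneg hA hcone
  have hsub : A *ᵥ (v - w) = 0 := by rw [mulVec_sub, hvw, sub_self]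
  refine sub_eq_zero.1 (le_antisymm (hker _ hsub) ?_)
  simpa using hker (-(v - w)) (by rw [mulVec_neg, hsub, neg_zero])

end OffDiagNonneg

theorem exists_eq_map_of_mulVec_eq_map [DecidableEq n] {K L : Type*} [Field K] [Field L]
    (f : K →+* L) {A : Matrix n n L} (hA : ∀ i j, ∃ a, A i j = f a)
    (hinj : Function.Injective A.mulVec) {v b : n → L} (hb : ∀ i, ∃ a, b i = f a)
    (hv : A *ᵥ v = b) : ∀ i, ∃ a, v i = f a := by
  choose A' hA' using hA
  choose b' hb' using hb
  have hAmap : A = (of A').map f := ext hA'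
  have hdet : IsUnit (of A').det := by
    have hdet' := (isUnit_iff_isUnit_det _).1 (mulVec_injective_iff_isUnit.1 hinj)
    rw [hAmap] at hdet'
    change IsUnit (f.mapMatrix (of A')).det at hdet'
    rw [← RingHom.map_det] at hdet'
    exact (isUnit_map_iff f _).1 hdet'
  set u := (of A')⁻¹ *ᵥ b'
  have hu : of A' *ᵥ u = b' := by rw [mulVec_mulVec, mul_nonsing_inv _ hdet, one_mulVec]
  have hvu : v = f ∘ u := hinj <| by
    funext i
    rw [hv, hb', ← hu, RingHom.map_mulVec, hAmap]
  exact fun i => ⟨u i, congrFun hvu i⟩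

end Matrix

theorem LinearMap.exists_rat_apply_eq {Λ V : Type*} [AddCommGroup V] [Module ℝ V]
    (B : Module.Basis Λ ℝ V) (f : V →ₗ[ℝ] ℝ) (hf : ∀ m, ∃ q : ℚ, f (B m) = q) {x : V}
    (hx : ∀ m, ∃ q : ℚ, B.repr x m = q) : ∃ q : ℚ, f x = q := by
  choose qf hqf using hf
  choose qx hqx using hx
  refine ⟨∑ m ∈ (B.repr x).support, qx m * qf m, ?_⟩
  conv_lhs => rw [← B.linearCombination_repr x]
  simp [Finsupp.linearCombination_apply, Finsupp.sum, hqf, hqx]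

section IntersectionMatrix

variable {Λ V R : Type*} [CommSemiring R] [AddCommMonoid V] [Module R V]

noncomputable def intersectionMatrix (B : Module.Basis Λ R V) (φ : Λ → V →ₗ[R] R)
    (S : Finset Λ) : Matrix S S R :=
  of fun l m => φ l (B m)

variable {B : Module.Basis Λ R V}

theorem Module.Basis.repr_sum_smul_subtype [DecidableEq Λ] {S : Finset Λ} (c : S → R)
    (l : Λ) : B.repr (∑ m : S, c m • B m) l = if h : l ∈ S then c ⟨l, h⟩ else 0 := by
  simp only [map_sum, map_smul, Module.Basis.repr_self, Finsupp.smul_single, smul_eq_mul,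
    mul_one, Finsupp.coe_finsetSum, Finset.sum_apply, Finsupp.single_apply]
  split_ifs with hl
  · rw [Finset.sum_eq_single ⟨l, hl⟩ (fun m _ hm => if_neg (hm ∘ Subtype.ext))
      (absurd (Finset.mem_univ _)), if_pos rfl]
  · exact Finset.sum_eq_zero fun m _ => if_neg fun (hm : (m : Λ) = l) => hl (hm ▸ m.2)

theorem Module.Basis.sum_repr_support_smul (z : V) :
    ∑ m : (B.repr z).support, B.repr z m • B m = z := by
  conv_rhs => rw [← B.linearCombination_repr z]
  rw [Finsupp.linearCombination_apply, Finsupp.sum]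
  exact Finset.sum_coe_sort _ (fun m => B.repr z m • B m)

theorem apply_sum_smul_eq_intersectionMatrix_mulVec (φ : Λ → V →ₗ[R] R) {S : Finset Λ}
    (c : S → R) (l : S) : φ l (∑ m : S, c m • B m) = (intersectionMatrix B φ S *ᵥ c) l := by
  simp [intersectionMatrix, mulVec, dotProduct, mul_comm]

end IntersectionMatrix

namespace IsZariskiDecomposition

variable {Λ V : Type*} [AddCommGroup V] [Module ℝ V] {B : Module.Basis Λ ℝ V}
  {φ : Λ → V →ₗ[ℝ] ℝ} {x y z : V}

theorem mulVec_injective (h : IsZariskiDecomposition B φ x y z)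
    (hφ : ∀ l m, l ≠ m → 0 ≤ φ l (B m)) :
    Function.Injective (intersectionMatrix B φ (B.repr z).support).mulVec := by
  classical
  obtain ⟨-, -, -, -, hcone⟩ := h
  refine mulVec_injective_of_offDiag_nonneg (fun l m hlm => hφ l m (Subtype.coe_ne_coe.2 hlm))
    fun c hc hAc => ?_
  have hw : ∑ m : (B.repr z).support, c m • B m = 0 := by
    refine hcone _ (fun l => ?_) (fun l hl => ?_) (fun l hl => ?_)
    · rw [B.repr_sum_smul_subtype]
      split_ifs
      exacts [hc _, le_rfl]
    · rw [B.repr_sum_smul_subtype] at hl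
      split_ifs at hl with hlS
      exacts [Finsupp.mem_support_iff.1 hlS, absurd rfl hl]
    · rw [apply_sum_smul_eq_intersectionMatrix_mulVec (l := ⟨l, Finsupp.mem_support_iff.2 hl⟩)]
      exact hAc _
  funext m
  have hm := B.repr_sum_smul_subtype c m
  rwa [hw, dif_pos m.2, map_zero, Finsupp.zero_apply, eq_comm] at hm

theorem intersectionMatrix_mulVec (h : IsZariskiDecomposition B φ x y z) :
    intersectionMatrix B φ (B.repr z).support *ᵥ (fun m => B.repr z m) =
      fun l : (B.repr z).support => φ l x := by
  obtain ⟨rfl, -, -, hy, -⟩ := h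
  funext l
  rw [← apply_sum_smul_eq_intersectionMatrix_mulVec, B.sum_repr_support_smul, map_add,
    hy l (Finsupp.mem_support_iff.1 l.2), zero_add]

end IsZariskiDecomposition

theorem stmt18 {Λ V : Type*} [AddCommGroup V] [Module ℝ V]
    (B : Module.Basis Λ ℝ V) (φ : Λ → V →ₗ[ℝ] ℝ)
    (hφ : ∀ l m : Λ, l ≠ m → 0 ≤ φ l (B m))
    (hq : ∀ l m : Λ, ∃ q : ℚ, φ l (B m) = (q : ℝ))
    (x y z : V)
    (hx : ∀ l, ∃ q : ℚ, B.repr x l = (q : ℝ))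
    (h : IsZariskiDecomposition B φ x y z) :
    (∀ l, ∃ q : ℚ, B.repr y l = (q : ℝ)) ∧ (∀ l, ∃ q : ℚ, B.repr z l = (q : ℝ)) := by
  classical
  have hzS := exists_eq_map_of_mulVec_eq_map (Rat.castHom ℝ)
    (A := intersectionMatrix B φ (B.repr z).support) (fun l m => hq l m)
    (h.mulVec_injective hφ) (fun l => (φ l).exists_rat_apply_eq B (hq l) hx)
    h.intersectionMatrix_mulVec
  have hz : ∀ l, ∃ q : ℚ, B.repr z l = q := fun l => by
    by_cases hl : l ∈ (B.repr z).support
    · exact hzS ⟨l, hl⟩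
    · exact ⟨0, by simpa using hl⟩
  refine ⟨fun l => ?_, hz⟩
  obtain ⟨p, hxp⟩ := hx l
  obtain ⟨q, hzq⟩ := hz l
  refine ⟨p - q, ?_⟩
  rw [eq_sub_of_add_eq h.1.symm, map_sub, Finsupp.sub_apply, hxp, hzq, Rat.cast_sub]
end
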